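/- Let P(z) = a_n z^n + Σ_{ν=μ}^{n} a_{n−ν} z^{n−ν}, where 1 ≤ μ ≤ n, be a polynomial of degree n (so the coefficients of z^{n−1}, ..., z^{n−μ+1} all vanish) having all its zeros in |z| ≤ k, where k ≤ 1. Then for every complex number α with |α| ≥ k^μ and every z with |z| = 1, one has |D_α P(z)| ≥ (|α| − k^μ)·|P'(z)|. -/

import Mathlib

/-!
Write `Q = n P - z P'`, the polar derivative `D₀ P`; then `D_α P = α P' + Q`, so it suffices to show
`‖Q z‖ ≤ k ^ μ ‖P' z‖` on the unit circle. If every zero `r` of `P` satisfies `‖r‖ ≤ ‖w‖`, then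
`w P'(w) / P(w) = ∑ w / (w - r)` has real part at least `n / 2`, whence `‖Q w‖ ≤ ‖w P'(w)‖`.
Substituting `w = 1 / u` and clearing denominators turns this into `‖u‖ ^ μ ‖A u‖ ≤ ‖B u‖` for
`‖u‖ < 1 / k`, where `A` and `B` are the reflections of `Q` and `X P'`; the factor `u ^ μ` is
produced by the coefficient gap, which lowers the degree of `Q` to `n - μ`. The maximum modulus
principle on the discs `‖u‖ < ρ < 1 / k` then bounds `‖A / B‖` by `k ^ μ`, and `u = 1 / z` is the
claim.
-/

open Polynomial Filter Topology Metric

namespace Complex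

theorem half_le_re_div_sub {w r : ℂ} (hr : ‖r‖ ≤ ‖w‖) (hrw : r ≠ w) :
    1 / 2 ≤ (w / (w - r)).re := by
  have hpos : 0 < normSq (w - r) := normSq_pos.2 (sub_ne_zero.2 hrw.symm)
  have hsq : r.re ^ 2 + r.im ^ 2 ≤ w.re ^ 2 + w.im ^ 2 := by
    have := pow_le_pow_left₀ (norm_nonneg r) hr 2
    simpa only [Complex.sq_norm, normSq_apply, ← sq] using this
  rw [div_re, ← add_div, le_div_iff₀ hpos]
  simp only [normSq_apply, sub_re, sub_im]
  nlinarith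

theorem norm_ofReal_sub_le {a : ℝ} {t : ℂ} (ha : 0 ≤ a) (h : a ≤ 2 * t.re) :
    ‖(a : ℂ) - t‖ ≤ ‖t‖ := by
  rw [norm_def, norm_def]
  gcongr
  simp only [normSq_apply, sub_re, sub_im, ofReal_re, ofReal_im]
  nlinarith

theorem norm_le_mul_pow_of_norm_pow_mul_le {g : ℂ → ℂ} {k M : ℝ} {μ : ℕ} (hk : 0 ≤ k)
    (hg : DifferentiableOn ℂ g {u | ‖u‖ * k < 1})
    (hbound : ∀ u : ℂ, u ≠ 0 → ‖u‖ * k < 1 → ‖u‖ ^ μ * ‖g u‖ ≤ M)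
    {u : ℂ} (hu : ‖u‖ * k < 1) : ‖g u‖ ≤ M * k ^ μ := by
  have hc : ∀ c, k < c → ‖u‖ * c ≤ 1 → ‖g u‖ ≤ M * c ^ μ := by
    intro c hkc huc
    have hc0 : 0 < c := hk.trans_lt hkc
    have hsub : closedBall (0 : ℂ) c⁻¹ ⊆ {u | ‖u‖ * k < 1} := fun v hv ↦ by
      rw [mem_closedBall_zero_iff] at hv
      calc ‖v‖ * k ≤ c⁻¹ * k := by gcongr
        _ < c⁻¹ * c := by gcongr
        _ = 1 := inv_mul_cancel₀ hc0.ne'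
    refine norm_le_of_forall_mem_frontier_norm_le isBounded_ball
      (hg.diffContOnCl_ball hsub) (fun v hv ↦ ?_) ?_
    · rw [frontier_ball 0 (inv_ne_zero hc0.ne'), mem_sphere_zero_iff_norm] at hv
      have hv0 : v ≠ 0 := norm_pos_iff.1 (hv ▸ inv_pos.2 hc0)
      have := hbound v hv0 (hsub (sphere_subset_closedBall (mem_sphere_zero_iff_norm.2 hv)))
      rwa [hv, inv_pow, inv_mul_le_iff₀ (pow_pos hc0 μ), mul_comm] at this
    · rwa [closure_ball 0 (inv_ne_zero hc0.ne'), mem_closedBall_zero_iff, ← one_div,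
        le_div_iff₀ hc0]
  have hlim : Tendsto (fun c : ℝ ↦ M * c ^ μ) (𝓝[>] k) (𝓝 (M * k ^ μ)) :=
    ((continuous_const.mul (continuous_pow μ)).tendsto k).mono_left nhdsWithin_le_nhds
  refine ge_of_tendsto hlim ?_
  have hnear : ∀ᶠ c in 𝓝[>] k, ‖u‖ * c < 1 := nhdsWithin_le_nhds
    ((continuousAt_const.mul continuousAt_id).eventually_lt continuousAt_const hu)
  filter_upwards [self_mem_nhdsWithin, hnear] with c hkc huc
  exact hc c hkc huc.le

end Complex

namespace Polynomial

noncomputable def polarDeriv (α : ℂ) (P : ℂ[X]) : ℂ[X] :=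
  C (P.natDegree : ℂ) * P + (C α - X) * derivative P

theorem eval_polarDeriv (α : ℂ) (P : ℂ[X]) (z : ℂ) :
    (polarDeriv α P).eval z = P.natDegree * P.eval z + (α - z) * (derivative P).eval z := by
  simp [polarDeriv]

theorem coeff_X_mul_derivative {R : Type*} [Semiring R] (p : R[X]) (m : ℕ) :
    (X * derivative p).coeff m = m * p.coeff m := by
  rcases m with _ | m
  · simp
  · rw [coeff_X_mul, coeff_derivative, ← Nat.cast_succ, Nat.cast_comm]

theorem coeff_polarDeriv_zero (P : ℂ[X]) (m : ℕ) :
    (polarDeriv 0 P).coeff m = (P.natDegree - m) * P.coeff m := by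
  simp only [polarDeriv, map_zero, zero_sub, neg_mul, coeff_add, coeff_neg, coeff_C_mul,
    coeff_X_mul_derivative]
  ring

theorem eval_reflect_mul_inv_pow {K : Type*} [Field K] {p : K[X]} {N : ℕ} (hp : p.natDegree ≤ N)
    {u : K} (hu : u ≠ 0) : (reflect N p).eval u * u⁻¹ ^ N = p.eval u⁻¹ := by
  let _ := invertibleOfNonzero (inv_ne_zero hu)
  have := eval₂_reflect_mul_pow (RingHom.id K) u⁻¹ N p hp
  rwa [invOf_eq_inv, inv_inv] at this

theorem natDegree_div_two_le_re (P : ℂ[X]) {w : ℂ} (hw : P.eval w ≠ 0)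
    (hroots : ∀ r ∈ P.roots, ‖r‖ ≤ ‖w‖) :
    (P.natDegree : ℝ) / 2 ≤ (w * (derivative P).eval w / P.eval w).re := by
  have hsum : w * (derivative P).eval w / P.eval w = (P.roots.map fun r ↦ w / (w - r)).sum := by
    rw [(IsAlgClosed.splits P).eval_derivative_eq_eval_mul_sum hw, mul_left_comm,
      mul_div_cancel_left₀ _ hw, ← Multiset.sum_map_mul_left]
    simp only [mul_one_div]
  have hre : ∀ x ∈ P.roots.map fun r ↦ (w / (w - r)).re, 1 / 2 ≤ x := by
    simp only [Multiset.mem_map]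
    rintro _ ⟨r, hr, rfl⟩
    refine Complex.half_le_re_div_sub (hroots r hr) fun hrw ↦ hw ?_
    rw [← hrw]
    exact (mem_roots'.1 hr).2
  have := Multiset.card_nsmul_le_sum hre
  rw [Multiset.card_map, IsAlgClosed.card_roots_eq_natDegree, nsmul_eq_mul] at this
  have hre_sum : (P.roots.map fun r ↦ w / (w - r)).sum.re =
      (P.roots.map fun r ↦ (w / (w - r)).re).sum := by
    simpa [Multiset.map_map, Function.comp_def] using
      map_multiset_sum Complex.reAddGroupHom (P.roots.map fun r ↦ w / (w - r))
  rw [hsum, hre_sum]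
  linarith

theorem norm_eval_polarDeriv_zero_le (P : ℂ[X]) {w : ℂ} (hroots : ∀ r ∈ P.roots, ‖r‖ ≤ ‖w‖) :
    ‖(polarDeriv 0 P).eval w‖ ≤ ‖w * (derivative P).eval w‖ := by
  rw [eval_polarDeriv, zero_sub, neg_mul, ← sub_eq_add_neg]
  by_cases hw : P.eval w = 0
  · rw [hw, mul_zero, zero_sub, norm_neg]
  set t := w * (derivative P).eval w / P.eval w
  have ht : w * (derivative P).eval w = P.eval w * t := by
    rw [mul_div_cancel₀ _ hw]
  have hre := natDegree_div_two_le_re P hw hroots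
  rw [ht, mul_comm _ (P.eval w), ← mul_sub, norm_mul, norm_mul]
  gcongr
  exact_mod_cast Complex.norm_ofReal_sub_le (Nat.cast_nonneg _) (by linarith)

theorem mul_eval_derivative_ne_zero (P : ℂ[X]) (hP : 0 < P.natDegree) {w : ℂ}
    (hroots : ∀ r ∈ P.roots, ‖r‖ < ‖w‖) : w * (derivative P).eval w ≠ 0 := by
  have hw : P.eval w ≠ 0 := fun h ↦
    (hroots w ((mem_roots (ne_zero_of_natDegree_gt hP)).2 h)).false
  intro h
  have := natDegree_div_two_le_re P hw fun r hr ↦ (hroots r hr).le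
  rw [h, zero_div, Complex.zero_re] at this
  have : (0 : ℝ) < P.natDegree := by exact_mod_cast hP
  linarith

theorem natDegree_X_mul_derivative_le (P : ℂ[X]) :
    (X * derivative P).natDegree ≤ P.natDegree := by
  rw [natDegree_le_iff_coeff_eq_zero]
  intro m hm
  rw [coeff_X_mul_derivative, coeff_eq_zero_of_natDegree_lt (by exact_mod_cast hm), mul_zero]

theorem natDegree_polarDeriv_zero_le {P : ℂ[X]} {μ : ℕ}
    (hgap : ∀ ν : ℕ, 1 ≤ ν → ν < μ → P.coeff (P.natDegree - ν) = 0) :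
    (polarDeriv 0 P).natDegree ≤ P.natDegree - μ := by
  rw [natDegree_le_iff_coeff_eq_zero]
  intro m hm
  have hm : P.natDegree - μ < m := by exact_mod_cast hm
  rw [coeff_polarDeriv_zero]
  rcases lt_trichotomy m P.natDegree with hlt | rfl | hgt
  · have := hgap (P.natDegree - m) (by omega) (by omega)
    rw [Nat.sub_sub_self hlt.le] at this
    rw [this, mul_zero]
  · rw [sub_self, zero_mul]
  · rw [coeff_eq_zero_of_natDegree_lt hgt, mul_zero]

theorem norm_pow_mul_eval_reflect_le {P : ℂ[X]} {μ : ℕ} (hμ : μ ≤ P.natDegree)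
    (hgap : ∀ ν : ℕ, 1 ≤ ν → ν < μ → P.coeff (P.natDegree - ν) = 0) {u : ℂ} (hu : u ≠ 0)
    (hroots : ∀ r ∈ P.roots, ‖r‖ * ‖u‖ ≤ 1) :
    ‖u‖ ^ μ * ‖(reflect (P.natDegree - μ) (polarDeriv 0 P)).eval u‖ ≤
      ‖(reflect P.natDegree (X * derivative P)).eval u‖ := by
  have ha : 0 < ‖u‖ := norm_pos_iff.2 hu
  have hA := eval_reflect_mul_inv_pow (natDegree_polarDeriv_zero_le hgap) hu
  have hB := eval_reflect_mul_inv_pow (natDegree_X_mul_derivative_le P) hu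
  have key : ‖(polarDeriv 0 P).eval u⁻¹‖ ≤ ‖(X * derivative P).eval u⁻¹‖ := by
    rw [eval_mul, eval_X]
    refine norm_eval_polarDeriv_zero_le P fun r hr ↦ ?_
    rw [norm_inv, ← one_div, le_div_iff₀ ha]
    exact hroots r hr
  rw [← hA, ← hB, norm_mul, norm_mul, norm_pow, norm_pow, norm_inv] at key
  calc ‖u‖ ^ μ * ‖(reflect (P.natDegree - μ) (polarDeriv 0 P)).eval u‖
      = ‖u‖ ^ P.natDegree * (‖(reflect (P.natDegree - μ) (polarDeriv 0 P)).eval u‖ *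
          ‖u‖⁻¹ ^ (P.natDegree - μ)) := by
        rw [inv_pow, ← pow_sub_mul_pow _ hμ]
        field_simp
    _ ≤ ‖u‖ ^ P.natDegree * (‖(reflect P.natDegree (X * derivative P)).eval u‖ *
          ‖u‖⁻¹ ^ P.natDegree) := by gcongr
    _ = ‖(reflect P.natDegree (X * derivative P)).eval u‖ := by
        rw [inv_pow]
        field_simp

theorem eval_reflect_X_mul_derivative_ne_zero {P : ℂ[X]} (hP : 0 < P.natDegree) {u : ℂ}
    (hroots : ∀ r ∈ P.roots, ‖r‖ * ‖u‖ < 1) :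
    (reflect P.natDegree (X * derivative P)).eval u ≠ 0 := by
  by_cases hu : u = 0
  · rw [hu, ← coeff_zero_eq_eval_zero, coeff_reflect, revAt_le (Nat.zero_le _), Nat.sub_zero,
      coeff_X_mul_derivative]
    exact mul_ne_zero (Nat.cast_ne_zero.2 hP.ne')
      (leadingCoeff_ne_zero.2 (ne_zero_of_natDegree_gt hP))
  · have hroots' : ∀ r ∈ P.roots, ‖r‖ < ‖u⁻¹‖ := fun r hr ↦ by
      rw [norm_inv, ← one_div, lt_div_iff₀ (norm_pos_iff.2 hu)]
      exact hroots r hr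
    have h := eval_reflect_mul_inv_pow (natDegree_X_mul_derivative_le P) hu
    rw [eval_mul, eval_X] at h
    exact left_ne_zero_of_mul (h ▸ mul_eval_derivative_ne_zero P hP hroots')

theorem norm_eval_polarDeriv_zero_le_pow_mul {P : ℂ[X]} {μ : ℕ} {k : ℝ} (hP : 0 < P.natDegree)
    (hμ : μ ≤ P.natDegree) (hgap : ∀ ν : ℕ, 1 ≤ ν → ν < μ → P.coeff (P.natDegree - ν) = 0)
    (hk : k ≤ 1) (hroots : ∀ r ∈ P.roots, ‖r‖ ≤ k) {z : ℂ} (hz : ‖z‖ = 1) :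
    ‖(polarDeriv 0 P).eval z‖ ≤ k ^ μ * ‖(derivative P).eval z‖ := by
  rcases hk.lt_or_eq with hk1 | rfl
  swap
  · simpa [hz] using norm_eval_polarDeriv_zero_le P (w := z) (by simpa [hz] using hroots)
  obtain ⟨r, hr⟩ := Complex.exists_root (natDegree_pos_iff_degree_pos.1 hP)
  have hk0 : 0 ≤ k :=
    (norm_nonneg r).trans (hroots r ((mem_roots (ne_zero_of_natDegree_gt hP)).2 hr))
  have hroots_u : ∀ u : ℂ, ‖u‖ * k < 1 → ∀ r ∈ P.roots, ‖r‖ * ‖u‖ < 1 := fun u hu r hr ↦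
    (mul_le_mul_of_nonneg_right (hroots r hr) (norm_nonneg u)).trans_lt (by rwa [mul_comm])
  set A := reflect (P.natDegree - μ) (polarDeriv 0 P)
  set B := reflect P.natDegree (X * derivative P)
  have hBne : ∀ u : ℂ, ‖u‖ * k < 1 → B.eval u ≠ 0 := fun u hu ↦
    eval_reflect_X_mul_derivative_ne_zero hP (hroots_u u hu)
  have hbound : ∀ u : ℂ, u ≠ 0 → ‖u‖ * k < 1 → ‖u‖ ^ μ * ‖A.eval u / B.eval u‖ ≤ 1 := by
    intro u hu huk
    rw [norm_div, mul_div_assoc', div_le_one (norm_pos_iff.2 (hBne u huk))]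
    exact norm_pow_mul_eval_reflect_le hμ hgap hu fun r hr ↦ (hroots_u u huk r hr).le
  have hz' : ‖z⁻¹‖ * k < 1 := by rwa [norm_inv, hz, inv_one, one_mul]
  have hmax := Complex.norm_le_mul_pow_of_norm_pow_mul_le
    (g := fun u ↦ A.eval u / B.eval u) hk0
    (A.differentiable.differentiableOn.div B.differentiable.differentiableOn hBne) hbound hz'
  rw [one_mul, norm_div, div_le_iff₀ (norm_pos_iff.2 (hBne _ hz'))] at hmax
  have hz0 : z⁻¹ ≠ 0 := inv_ne_zero (norm_ne_zero_iff.1 (hz ▸ one_ne_zero))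
  have hA := eval_reflect_mul_inv_pow (natDegree_polarDeriv_zero_le hgap) hz0
  have hB := eval_reflect_mul_inv_pow (natDegree_X_mul_derivative_le P) hz0
  rw [inv_inv] at hA hB
  rw [← hA, norm_mul, norm_pow, hz, one_pow, mul_one]
  have hBz : ‖B.eval z⁻¹‖ = ‖(derivative P).eval z‖ := by
    simpa [hz] using congrArg norm hB
  rwa [← hBz]

end Polynomial

theorem stmt_16_general (P : Polynomial ℂ) (n μ : ℕ) (k : ℝ) (α : ℂ)
    (hdeg : P.degree = n) (hμ1 : 1 ≤ μ) (hμn : μ ≤ n)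
    (hgap : ∀ ν : ℕ, 1 ≤ ν → ν < μ → P.coeff (n - ν) = 0)
    (hk : k ≤ 1)
    (hzeros : ∀ z : ℂ, P.eval z = 0 → ‖z‖ ≤ k) :
    ∀ z : ℂ, ‖z‖ = 1 →
      (‖α‖ - k ^ μ) * ‖(Polynomial.derivative P).eval z‖ ≤
        ‖(n : ℂ) * P.eval z + (α - z) * (Polynomial.derivative P).eval z‖ := by
  intro z hz
  obtain rfl : P.natDegree = n := natDegree_eq_of_degree_eq_some hdeg
  have hroots : ∀ r ∈ P.roots, ‖r‖ ≤ k := fun r hr ↦ hzeros r (isRoot_of_mem_roots hr)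
  have hkey := norm_eval_polarDeriv_zero_le_pow_mul (hμ1.trans hμn) hμn hgap hk hroots hz
  have hsplit : (P.natDegree : ℂ) * P.eval z + (α - z) * (derivative P).eval z =
      α * (derivative P).eval z + (polarDeriv 0 P).eval z := by
    rw [eval_polarDeriv]
    ring
  rw [hsplit, sub_mul, ← norm_mul]
  linarith [norm_le_add_norm_add (α * (derivative P).eval z) ((polarDeriv 0 P).eval z)]

theorem stmt_16 (P : Polynomial ℂ) (n μ : ℕ) (k : ℝ) (α : ℂ)
    (hdeg : P.degree = n) (hμ1 : 1 ≤ μ) (hμn : μ ≤ n)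
    (hgap : ∀ ν : ℕ, 1 ≤ ν → ν < μ → P.coeff (n - ν) = 0)
    (hk : k ≤ 1)
    (hzeros : ∀ z : ℂ, P.eval z = 0 → ‖z‖ ≤ k)
    (hα : k ^ μ ≤ ‖α‖) :
    ∀ z : ℂ, ‖z‖ = 1 →
      (‖α‖ - k ^ μ) * ‖(Polynomial.derivative P).eval z‖ ≤
        ‖(n : ℂ) * P.eval z + (α - z) * (Polynomial.derivative P).eval z‖ :=
  stmt_16_general P n μ k α hdeg hμ1 hμn hgap hk hzeros
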